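/- arXiv:1004.0558 — 5 statements merged into one kernel-verified Lean document; each statement's English description precedes it below -/
import Mathlib

section
/- Let K be a convex subset of the Euclidean plane and q a fixed point. Then the set S = {x ∈ K : dist(x, q) ≤ dist(x, Kᶜ)} is convex. (S is the set of centers x such that the largest ball centered at x inscribed in K contains q.) -/
/-! The distance to the complement of a convex set `K` is concave on `K`: if `w ∉ K` were closer
to `a • x + b • y` than `a d(x) + b d(y)`, then `w` would be the same convex combination of two
points lying in the inscribed balls at `x` and at `y`, hence in `K`. The set in question is then a
sublevel set of the convex function `x ↦ dist x q - infDist x Kᶜ` on `K`. -/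

open Metric

variable {E : Type*} [NormedAddCommGroup E] [NormedSpace ℝ E] {K : Set E}

theorem add_infDist_compl_smul_mem {x v : E} (hx : x ∈ K) (hv : ‖v‖ < 1) :
    x + infDist x Kᶜ • v ∈ K := by
  rcases (infDist_nonneg : 0 ≤ infDist x Kᶜ).eq_or_lt with hd | hd
  · simpa [← hd] using hx
  · refine ball_infDist_compl_subset (x := x) ?_
    rw [mem_ball, dist_eq_norm, add_sub_cancel_left, norm_smul, Real.norm_of_nonneg hd.le]
    exact mul_lt_of_lt_one_right hd hv

theorem Convex.concaveOn_infDist_compl (hK : Convex ℝ K) :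
    ConcaveOn ℝ K fun x => infDist x Kᶜ := by
  refine ⟨hK, fun x hx y hy a b ha hb hab => ?_⟩
  rcases Kᶜ.eq_empty_or_nonempty with hc | hc
  · simp [hc]
  set z := a • x + b • y
  set t := a • infDist x Kᶜ + b • infDist y Kᶜ
  refine (le_infDist hc).2 fun w hw => not_lt.1 fun hwz => hw ?_
  have ht : 0 < t := dist_nonneg.trans_lt hwz
  set v := t⁻¹ • (w - z)
  have hv : ‖v‖ < 1 := by
    rw [norm_smul, norm_inv, Real.norm_of_nonneg ht.le, ← dist_eq_norm, dist_comm]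
    exact (inv_mul_lt_one₀ ht).2 hwz
  have hw_combo : a • (x + infDist x Kᶜ • v) + b • (y + infDist y Kᶜ • v) = w := by
    have : a • (x + infDist x Kᶜ • v) + b • (y + infDist y Kᶜ • v) = z + t • v := by
      simp only [z, t, smul_add, smul_smul, add_smul, smul_eq_mul]
      abel
    rw [this, smul_inv_smul₀ ht.ne', add_sub_cancel]
  rw [← hw_combo]
  exact hK (add_infDist_compl_smul_mem hx hv) (add_infDist_compl_smul_mem hy hv) ha hb hab

theorem centers_containing_query_convex (K : Set (EuclideanSpace ℝ (Fin 2)))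
    (hK : Convex ℝ K) (q : EuclideanSpace ℝ (Fin 2)) :
    Convex ℝ {x ∈ K | dist x q ≤ Metric.infDist x Kᶜ} := by
  have h := ((convexOn_dist q hK).sub hK.concaveOn_infDist_compl).convex_le 0
  simpa only [Pi.sub_apply, sub_nonpos] using h
end

section
/- Let P be a finite set of points in the Euclidean plane and let q be a point not in the closed convex hull of P. Then for every R > 0 there exist a center c and radius ρ ≥ R such that q ∈ closedBall(c, ρ) and the open ball ball(c, ρ) contains no point of P. -/
open scoped RealInnerProductSpace

theorem arbitrarily_large_empty_balls_outside_hull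
    (P : Finset (EuclideanSpace ℝ (Fin 2))) (q : EuclideanSpace ℝ (Fin 2))
    (hq : q ∉ closure (convexHull ℝ (P : Set (EuclideanSpace ℝ (Fin 2)))))
    (R : ℝ) (hR : 0 < R) :
    ∃ (c : EuclideanSpace ℝ (Fin 2)) (ρ : ℝ), R ≤ ρ ∧
      q ∈ Metric.closedBall c ρ ∧ ∀ p ∈ P, p ∉ Metric.ball c ρ := by
  let E := EuclideanSpace ℝ (Fin 2)
  by_cases hP : (P : Set E).Nonempty
  · obtain ⟨f, s, hfq, hfs⟩ :=
      geometric_hahn_banach_point_closed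
        ((convex_convexHull ℝ (P : Set E)).closure) isClosed_closure hq
    set v : E := (InnerProductSpace.toDual ℝ E).symm f with hv
    have hfv : ∀ x : E, f x = ⟪v, x⟫ := by
      intro x
      rw [hv, InnerProductSpace.toDual_symm_apply]
    obtain ⟨p0, hp0⟩ := hP
    have hsep0 : f q < f p0 :=
      lt_trans hfq (hfs p0 (subset_closure (subset_convexHull ℝ _ hp0)))
    have hvne : v ≠ 0 := by
      intro h
      rw [hfv p0, hfv q, h] at hsep0
      simp at hsep0
    have hvnorm : 0 < ‖v‖ := norm_pos_iff.mpr hvne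
    set u : E := ‖v‖⁻¹ • v with hu
    have hunorm : ‖u‖ = 1 := by
      rw [hu, norm_smul, norm_inv, norm_norm, inv_mul_cancel₀ (ne_of_gt hvnorm)]
    refine ⟨q - R • u, R, le_refl R, ?_, ?_⟩
    · simp only [Metric.mem_closedBall, dist_eq_norm]
      rw [sub_sub_cancel, norm_smul, hunorm]
      simp [abs_of_pos hR]
    · intro p hp
      simp only [Metric.mem_ball, dist_eq_norm, not_lt]
      have hsep : f q < f p :=
        lt_trans hfq (hfs p (subset_closure (subset_convexHull ℝ _ hp)))
      have key : ⟪u, p - (q - R • u)⟫ ≥ R := by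
        rw [inner_sub_right, inner_sub_right, inner_smul_right,
          real_inner_self_eq_norm_sq, hunorm]
        have : ⟪u, p⟫ - ⟪u, q⟫ > 0 := by
          rw [hu, inner_smul_left, inner_smul_left]
          have : ⟪v, p⟫ > ⟪v, q⟫ := by rw [← hfv, ← hfv]; exact hsep
          have hinv : (0:ℝ) < ‖v‖⁻¹ := inv_pos.mpr hvnorm
          simp only [RCLike.star_def, starRingEnd_apply, star_trivial]
          nlinarith
        nlinarith
      calc R ≤ ⟪u, p - (q - R • u)⟫ := key
        _ ≤ ‖u‖ * ‖p - (q - R • u)‖ := real_inner_le_norm _ _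
        _ = ‖p - (q - R • u)‖ := by rw [hunorm, one_mul]
  · refine ⟨q, R, le_refl R, Metric.mem_closedBall_self hR.le, ?_⟩
    intro p hp
    exact absurd ⟨p, hp⟩ hP
end

section
/- Let P be a finite set of points in the Euclidean plane and let q be a point in the interior of the convex hull of P. Then there exists R > 0 such that every closed ball closedBall(c, ρ) containing q whose interior ball(c, ρ) is disjoint from P satisfies ρ ≤ R. -/
/-!
If `closedBall q ε` lies in the convex hull of `P`, then in every direction `v` some `p ∈ P`
satisfies `ε ‖v‖ ≤ ⟪v, p - q⟫`, because a linear functional attains its maximum over the hull at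
a point of `P`. For an empty ball `ball c ρ` whose closure contains `q`, take `v = c - q`:
expanding `ρ² ≤ ‖p - c‖²` gives `ρ² ≤ r² - 2ε‖c - q‖ + ‖c - q‖²`, where `P ⊆ closedBall q r`.
As `‖c - q‖ ≤ ρ`, this forces `‖c - q‖ ≤ r² / (2ε)`, and then `ρ ≤ r + r² / (2ε)`.
-/

open Metric
open scoped RealInnerProductSpace

section InnerProductSpace

variable {E : Type*} [NormedAddCommGroup E] [InnerProductSpace ℝ E]

theorem exists_mem_inner_sub_ge_of_closedBall_subset_convexHull {s : Set E} {q : E} {ε : ℝ}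
    (hε : 0 ≤ ε) (hs : closedBall q ε ⊆ convexHull ℝ s) (v : E) :
    ∃ p ∈ s, ε * ‖v‖ ≤ ⟪v, p - q⟫ := by
  set x := q + ε • ‖v‖⁻¹ • v
  have hx : x ∈ convexHull ℝ s := by
    refine hs (mem_closedBall_iff_norm.2 ?_)
    simpa [x, norm_smul, abs_of_nonneg hε] using mul_le_of_le_one_right hε inv_mul_le_one
  have hxq : ⟪v, x - q⟫ = ε * ‖v‖ := by
    rw [add_sub_cancel_left, inner_smul_right, inner_smul_right, real_inner_self_eq_norm_sq, sq,
      ← mul_assoc ‖v‖⁻¹, inv_mul_mul_self]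
  obtain ⟨p, hp, hxp⟩ :=
    ((innerSL ℝ v).toLinearMap.convexOn (convex_convexHull ℝ s)).exists_ge_of_mem_convexHull
      (subset_convexHull ℝ s) hx
  refine ⟨p, hp, ?_⟩
  simp only [ContinuousLinearMap.coe_coe, innerSL_apply_apply] at hxp
  rw [← hxq, inner_sub_right, inner_sub_right]
  linarith

theorem radius_le_of_closedBall_subset_convexHull {s : Set E} {q c : E} {ε r ρ : ℝ}
    (hε : 0 < ε) (hs : closedBall q ε ⊆ convexHull ℝ s) (hsr : s ⊆ closedBall q r)
    (hqc : q ∈ closedBall c ρ) (hc : ∀ p ∈ s, p ∉ ball c ρ) :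
    ρ ≤ r + r ^ 2 / (2 * ε) := by
  obtain ⟨p, hp, hpv⟩ := exists_mem_inner_sub_ge_of_closedBall_subset_convexHull hε.le hs (c - q)
  have hpq : ‖p - q‖ ≤ r := mem_closedBall_iff_norm.1 (hsr hp)
  have hpc : ρ ≤ ‖p - c‖ := by simpa [dist_eq_norm] using hc p hp
  have hcq : ‖c - q‖ ≤ ρ := by simpa [dist_eq_norm, norm_sub_rev] using hqc
  have hexpand : ‖p - c‖ ^ 2 = ‖p - q‖ ^ 2 - 2 * ⟪c - q, p - q⟫ + ‖c - q‖ ^ 2 := by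
    rw [real_inner_comm, ← norm_sub_sq_real, sub_sub_sub_cancel_right]
  have hρ : ρ ^ 2 ≤ r ^ 2 - 2 * ε * ‖c - q‖ + ‖c - q‖ ^ 2 := by
    nlinarith [norm_nonneg (c - q), norm_nonneg (p - q)]
  have hcq_le : ‖c - q‖ ≤ r ^ 2 / (2 * ε) := by
    rw [le_div_iff₀ (by positivity)]
    nlinarith [norm_nonneg (c - q)]
  have hρ_le : ρ ≤ r + ‖c - q‖ := by
    nlinarith [norm_nonneg (c - q), norm_nonneg (p - q)]
  linarith

end InnerProductSpace

theorem empty_ball_radius_bounded_inside_hull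
    (P : Finset (EuclideanSpace ℝ (Fin 2))) (q : EuclideanSpace ℝ (Fin 2))
    (hq : q ∈ interior (convexHull ℝ (P : Set (EuclideanSpace ℝ (Fin 2))))) :
    ∃ R : ℝ, 0 < R ∧ ∀ (c : EuclideanSpace ℝ (Fin 2)) (ρ : ℝ),
      q ∈ Metric.closedBall c ρ → (∀ p ∈ P, p ∉ Metric.ball c ρ) → ρ ≤ R := by
  obtain ⟨ε, hε, hεP⟩ := nhds_basis_closedBall.mem_iff.1 (mem_interior_iff_mem_nhds.1 hq)
  obtain ⟨r, hr, hrP⟩ := P.finite_toSet.isBounded.subset_closedBall_lt 0 q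
  exact ⟨r + r ^ 2 / (2 * ε), by positivity, fun c ρ hqc hc =>
    radius_le_of_closedBall_subset_convexHull hε hεP hrP hqc hc⟩
end

section
/- Let A = [X₀, X₁] × [Y₀, Y₁] be an axis-parallel box in the plane (X₀ < X₁, Y₀ < Y₁) and P a finite set of points in A. Let R = [a, b] × [c, d] ⊆ A with a < b, c < d be an empty rectangle, i.e., its interior (a, b) × (c, d) contains no point of P. If R is maximal (no empty rectangle R' ⊆ A properly contains R), then a = X₀ or there exists p ∈ P with p.1 = a and c ≤ p.2 ≤ d; and symmetrically for the sides b, c, and d. -/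
lemma ext_lo (T : Finset ℝ) (X₀ a b : ℝ) (hX : X₀ < a) (hab : a < b)
    (h1 : ∀ t ∈ T, t ∉ Set.Ioo a b) (h2 : a ∉ T) :
    ∃ a', X₀ ≤ a' ∧ a' < a ∧ ∀ t ∈ T, t ∉ Set.Ioo a' b := by
  classical
  set s := insert X₀ (T.filter (· < a)) with hs_def
  have hs : s.Nonempty := ⟨X₀, Finset.mem_insert_self _ _⟩
  refine ⟨s.max' hs, Finset.le_max' s X₀ (Finset.mem_insert_self _ _), ?_, ?_⟩
  · apply Finset.max'_lt_iff s hs |>.2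
    intro y hy
    rcases Finset.mem_insert.1 hy with h | h
    · exact h ▸ hX
    · exact (Finset.mem_filter.1 h).2
  · rintro t ht ⟨h3, h4⟩
    rcases lt_trichotomy t a with h | h | h
    · have : t ∈ s := Finset.mem_insert.2 (Or.inr (Finset.mem_filter.2 ⟨ht, h⟩))
      exact absurd (Finset.le_max' s t this) (not_le.2 h3)
    · exact h2 (h ▸ ht)
    · exact h1 t ht ⟨h, h4⟩

lemma ext_hi (T : Finset ℝ) (X₁ a b : ℝ) (hX : b < X₁) (hab : a < b)
    (h1 : ∀ t ∈ T, t ∉ Set.Ioo a b) (h2 : b ∉ T) :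
    ∃ b', b' ≤ X₁ ∧ b < b' ∧ ∀ t ∈ T, t ∉ Set.Ioo a b' := by
  classical
  set s := insert X₁ (T.filter (b < ·)) with hs_def
  have hs : s.Nonempty := ⟨X₁, Finset.mem_insert_self _ _⟩
  refine ⟨s.min' hs, Finset.min'_le s X₁ (Finset.mem_insert_self _ _), ?_, ?_⟩
  · apply Finset.lt_min'_iff s hs |>.2
    intro y hy
    rcases Finset.mem_insert.1 hy with h | h
    · exact h ▸ hX
    · exact (Finset.mem_filter.1 h).2
  · rintro t ht ⟨h3, h4⟩
    rcases lt_trichotomy t b with h | h | h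
    · exact h1 t ht ⟨h3, h⟩
    · exact h2 (h ▸ ht)
    · have : t ∈ s := Finset.mem_insert.2 (Or.inr (Finset.mem_filter.2 ⟨ht, h⟩))
      exact absurd (Finset.min'_le s t this) (not_le.2 h4)

theorem maximal_empty_rectangle_sides_supported
    (X₀ X₁ Y₀ Y₁ a b c d : ℝ) (hX : X₀ < X₁) (hY : Y₀ < Y₁)
    (hab : a < b) (hcd : c < d)
    (P : Finset (ℝ × ℝ))
    (hP : ∀ p ∈ P, p ∈ Set.Icc X₀ X₁ ×ˢ Set.Icc Y₀ Y₁)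
    (hsub : Set.Icc a b ×ˢ Set.Icc c d ⊆ Set.Icc X₀ X₁ ×ˢ Set.Icc Y₀ Y₁)
    (hempty : ∀ p ∈ P, p ∉ Set.Ioo a b ×ˢ Set.Ioo c d)
    (hmax : ∀ a' b' c' d' : ℝ, a' < b' → c' < d' →
      Set.Icc a' b' ×ˢ Set.Icc c' d' ⊆ Set.Icc X₀ X₁ ×ˢ Set.Icc Y₀ Y₁ →
      (∀ p ∈ P, p ∉ Set.Ioo a' b' ×ˢ Set.Ioo c' d') →
      Set.Icc a b ×ˢ Set.Icc c d ⊆ Set.Icc a' b' ×ˢ Set.Icc c' d' →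
      Set.Icc a' b' ×ˢ Set.Icc c' d' = Set.Icc a b ×ˢ Set.Icc c d) :
    (a = X₀ ∨ ∃ p ∈ P, p.1 = a ∧ p.2 ∈ Set.Icc c d) ∧
    (b = X₁ ∨ ∃ p ∈ P, p.1 = b ∧ p.2 ∈ Set.Icc c d) ∧
    (c = Y₀ ∨ ∃ p ∈ P, p.2 = c ∧ p.1 ∈ Set.Icc a b) ∧
    (d = Y₁ ∨ ∃ p ∈ P, p.2 = d ∧ p.1 ∈ Set.Icc a b) := by
  classical
  have hac : ((a, c) : ℝ × ℝ) ∈ Set.Icc a b ×ˢ Set.Icc c d :=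
    ⟨⟨le_refl a, hab.le⟩, ⟨le_refl c, hcd.le⟩⟩
  have hbd : ((b, d) : ℝ × ℝ) ∈ Set.Icc a b ×ˢ Set.Icc c d :=
    ⟨⟨hab.le, le_refl b⟩, ⟨hcd.le, le_refl d⟩⟩
  have hX0a : X₀ ≤ a := (hsub hac).1.1
  have hbX1 : b ≤ X₁ := (hsub hbd).1.2
  have hY0c : Y₀ ≤ c := (hsub hac).2.1
  have hdY1 : d ≤ Y₁ := (hsub hbd).2.2
  set Tx : Finset ℝ := (P.filter (fun p => c < p.2 ∧ p.2 < d)).image Prod.fst with hTx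
  set Ty : Finset ℝ := (P.filter (fun p => a < p.1 ∧ p.1 < b)).image Prod.snd with hTy
  have h1x : ∀ t ∈ Tx, t ∉ Set.Ioo a b := by
    intro t ht
    obtain ⟨p, hp, rfl⟩ := Finset.mem_image.1 ht
    obtain ⟨hpP, hpy⟩ := Finset.mem_filter.1 hp
    intro hmem
    exact hempty p hpP ⟨hmem, hpy⟩
  have h1y : ∀ t ∈ Ty, t ∉ Set.Ioo c d := by
    intro t ht
    obtain ⟨p, hp, rfl⟩ := Finset.mem_image.1 ht
    obtain ⟨hpP, hpx⟩ := Finset.mem_filter.1 hp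
    intro hmem
    exact hempty p hpP ⟨hpx, hmem⟩
  refine ⟨?_, ?_, ?_, ?_⟩
  · -- left side
    by_contra hL
    push_neg at hL
    obtain ⟨hne, hside⟩ := hL
    have h2x : a ∉ Tx := by
      intro h
      obtain ⟨p, hp, hpa⟩ := Finset.mem_image.1 h
      obtain ⟨hpP, hpy⟩ := Finset.mem_filter.1 hp
      exact hside p hpP hpa ⟨hpy.1.le, hpy.2.le⟩
    obtain ⟨a', hX0a', ha'a, hT⟩ :=
      ext_lo Tx X₀ a b (lt_of_le_of_ne hX0a (Ne.symm hne)) hab h1x h2x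
    have heq := hmax a' b c d (ha'a.trans hab) hcd
      (by rintro ⟨x, y⟩ ⟨⟨hx1, hx2⟩, hy1, hy2⟩
          exact ⟨⟨hX0a'.trans hx1, hx2.trans hbX1⟩, hY0c.trans hy1, hy2.trans hdY1⟩)
      (by rintro p hp ⟨⟨h3, h4⟩, h5, h6⟩
          exact hT p.1 (Finset.mem_image.2 ⟨p, Finset.mem_filter.2 ⟨hp, h5, h6⟩, rfl⟩) ⟨h3, h4⟩)
      (by rintro ⟨x, y⟩ ⟨⟨hx1, hx2⟩, hy⟩
          exact ⟨⟨ha'a.le.trans hx1, hx2⟩, hy⟩)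
    have : ((a', c) : ℝ × ℝ) ∈ Set.Icc a' b ×ˢ Set.Icc c d :=
      ⟨⟨le_refl _, (ha'a.trans hab).le⟩, ⟨le_refl _, hcd.le⟩⟩
    rw [heq] at this
    exact absurd this.1.1 (not_le.2 ha'a)
  · -- right side
    by_contra hL
    push_neg at hL
    obtain ⟨hne, hside⟩ := hL
    have h2x : b ∉ Tx := by
      intro h
      obtain ⟨p, hp, hpa⟩ := Finset.mem_image.1 h
      obtain ⟨hpP, hpy⟩ := Finset.mem_filter.1 hp
      exact hside p hpP hpa ⟨hpy.1.le, hpy.2.le⟩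
    obtain ⟨b', hb'X1, hbb', hT⟩ :=
      ext_hi Tx X₁ a b (lt_of_le_of_ne hbX1 hne) hab h1x h2x
    have heq := hmax a b' c d (hab.trans hbb') hcd
      (by rintro ⟨x, y⟩ ⟨⟨hx1, hx2⟩, hy1, hy2⟩
          exact ⟨⟨hX0a.trans hx1, hx2.trans hb'X1⟩, hY0c.trans hy1, hy2.trans hdY1⟩)
      (by rintro p hp ⟨⟨h3, h4⟩, h5, h6⟩
          exact hT p.1 (Finset.mem_image.2 ⟨p, Finset.mem_filter.2 ⟨hp, h5, h6⟩, rfl⟩) ⟨h3, h4⟩)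
      (by rintro ⟨x, y⟩ ⟨⟨hx1, hx2⟩, hy⟩
          exact ⟨⟨hx1, hx2.trans hbb'.le⟩, hy⟩)
    have : ((b', c) : ℝ × ℝ) ∈ Set.Icc a b' ×ˢ Set.Icc c d :=
      ⟨⟨(hab.trans hbb').le, le_refl _⟩, ⟨le_refl _, hcd.le⟩⟩
    rw [heq] at this
    exact absurd this.1.2 (not_le.2 hbb')
  · -- bottom side
    by_contra hL
    push_neg at hL
    obtain ⟨hne, hside⟩ := hL
    have h2y : c ∉ Ty := by
      intro h
      obtain ⟨p, hp, hpa⟩ := Finset.mem_image.1 h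
      obtain ⟨hpP, hpx⟩ := Finset.mem_filter.1 hp
      exact hside p hpP hpa ⟨hpx.1.le, hpx.2.le⟩
    obtain ⟨c', hY0c', hc'c, hT⟩ :=
      ext_lo Ty Y₀ c d (lt_of_le_of_ne hY0c (Ne.symm hne)) hcd h1y h2y
    have heq := hmax a b c' d hab (hc'c.trans hcd)
      (by rintro ⟨x, y⟩ ⟨⟨hx1, hx2⟩, hy1, hy2⟩
          exact ⟨⟨hX0a.trans hx1, hx2.trans hbX1⟩, hY0c'.trans hy1, hy2.trans hdY1⟩)
      (by rintro p hp ⟨⟨h3, h4⟩, h5, h6⟩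
          exact hT p.2 (Finset.mem_image.2 ⟨p, Finset.mem_filter.2 ⟨hp, h3, h4⟩, rfl⟩) ⟨h5, h6⟩)
      (by rintro ⟨x, y⟩ ⟨hx, hy1, hy2⟩
          exact ⟨hx, hc'c.le.trans hy1, hy2⟩)
    have : ((a, c') : ℝ × ℝ) ∈ Set.Icc a b ×ˢ Set.Icc c' d :=
      ⟨⟨le_refl _, hab.le⟩, ⟨le_refl _, (hc'c.trans hcd).le⟩⟩
    rw [heq] at this
    exact absurd this.2.1 (not_le.2 hc'c)
  · -- top side
    by_contra hL
    push_neg at hL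
    obtain ⟨hne, hside⟩ := hL
    have h2y : d ∉ Ty := by
      intro h
      obtain ⟨p, hp, hpa⟩ := Finset.mem_image.1 h
      obtain ⟨hpP, hpx⟩ := Finset.mem_filter.1 hp
      exact hside p hpP hpa ⟨hpx.1.le, hpx.2.le⟩
    obtain ⟨d', hd'Y1, hdd', hT⟩ :=
      ext_hi Ty Y₁ c d (lt_of_le_of_ne hdY1 hne) hcd h1y h2y
    have heq := hmax a b c d' hab (hcd.trans hdd')
      (by rintro ⟨x, y⟩ ⟨⟨hx1, hx2⟩, hy1, hy2⟩
          exact ⟨⟨hX0a.trans hx1, hx2.trans hbX1⟩, hY0c.trans hy1, hy2.trans hd'Y1⟩)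
      (by rintro p hp ⟨⟨h3, h4⟩, h5, h6⟩
          exact hT p.2 (Finset.mem_image.2 ⟨p, Finset.mem_filter.2 ⟨hp, h3, h4⟩, rfl⟩) ⟨h5, h6⟩)
      (by rintro ⟨x, y⟩ ⟨hx, hy1, hy2⟩
          exact ⟨hx, hy1, hy2.trans hdd'.le⟩)
    have : ((a, d') : ℝ × ℝ) ∈ Set.Icc a b ×ˢ Set.Icc c d' :=
      ⟨⟨le_refl _, hab.le⟩, ⟨hcd.le.trans hdd'.le, le_refl _⟩⟩
    rw [heq] at this
    exact absurd this.2.2 (not_le.2 hdd')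
end

section
/- Let A = [X₀, X₁] × [Y₀, Y₁] be a box and P ⊆ A a finite set of points. Let x₀ < x₁ be consecutive elements of the set {X₀, X₁} ∪ {p.1 : p ∈ P} (i.e., no element of this set lies strictly between them), and similarly y₀ < y₁ consecutive in {Y₀, Y₁} ∪ {p.2 : p ∈ P}, and let c = (x₀, x₁) × (y₀, y₁) be the corresponding open grid cell. Then for every maximal empty axis-parallel rectangle R in A, either c ⊆ R or c ∩ interior(R) = ∅. -/
theorem grid_cell_dichotomy
    (X₀ X₁ Y₀ Y₁ x₀ x₁ y₀ y₁ a b c' d' : ℝ) (hX : X₀ < X₁) (hY : Y₀ < Y₁)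
    (P : Finset (ℝ × ℝ))
    (hP : ∀ p ∈ P, p ∈ Set.Icc X₀ X₁ ×ˢ Set.Icc Y₀ Y₁)
    (hx : x₀ < x₁) (hy : y₀ < y₁)
    (hx₀ : x₀ ∈ ({X₀, X₁} : Set ℝ) ∪ (fun p : ℝ × ℝ => p.1) '' P)
    (hx₁ : x₁ ∈ ({X₀, X₁} : Set ℝ) ∪ (fun p : ℝ × ℝ => p.1) '' P)
    (hxcons : ∀ s ∈ ({X₀, X₁} : Set ℝ) ∪ (fun p : ℝ × ℝ => p.1) '' P,
      ¬(x₀ < s ∧ s < x₁))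
    (hy₀ : y₀ ∈ ({Y₀, Y₁} : Set ℝ) ∪ (fun p : ℝ × ℝ => p.2) '' P)
    (hy₁ : y₁ ∈ ({Y₀, Y₁} : Set ℝ) ∪ (fun p : ℝ × ℝ => p.2) '' P)
    (hycons : ∀ s ∈ ({Y₀, Y₁} : Set ℝ) ∪ (fun p : ℝ × ℝ => p.2) '' P,
      ¬(y₀ < s ∧ s < y₁))
    (hab : a < b) (hcd : c' < d')
    (hsub : Set.Icc a b ×ˢ Set.Icc c' d' ⊆ Set.Icc X₀ X₁ ×ˢ Set.Icc Y₀ Y₁)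
    (hempty : ∀ p ∈ P, p ∉ Set.Ioo a b ×ˢ Set.Ioo c' d')
    (hmax : ∀ a'' b'' c'' d'' : ℝ, a'' < b'' → c'' < d'' →
      Set.Icc a'' b'' ×ˢ Set.Icc c'' d'' ⊆ Set.Icc X₀ X₁ ×ˢ Set.Icc Y₀ Y₁ →
      (∀ p ∈ P, p ∉ Set.Ioo a'' b'' ×ˢ Set.Ioo c'' d'') →
      Set.Icc a b ×ˢ Set.Icc c' d' ⊆ Set.Icc a'' b'' ×ˢ Set.Icc c'' d'' →
      Set.Icc a'' b'' ×ˢ Set.Icc c'' d'' = Set.Icc a b ×ˢ Set.Icc c' d') :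
    Set.Ioo x₀ x₁ ×ˢ Set.Ioo y₀ y₁ ⊆ Set.Icc a b ×ˢ Set.Icc c' d' ∨
    (Set.Ioo x₀ x₁ ×ˢ Set.Ioo y₀ y₁) ∩ (Set.Ioo a b ×ˢ Set.Ioo c' d') = ∅ := by
  by_cases hne : (Set.Ioo x₀ x₁ ×ˢ Set.Ioo y₀ y₁) ∩ (Set.Ioo a b ×ˢ Set.Ioo c' d') = ∅
  · exact Or.inr hne
  left
  obtain ⟨z, hz⟩ := Set.nonempty_iff_ne_empty.mpr hne
  obtain ⟨⟨⟨hzx0, hzx1⟩, hzy0, hzy1⟩, ⟨hza, hzb⟩, hzc, hzd⟩ := hz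
  -- corner bounds from hsub
  have hcorner1 := hsub (Set.mk_mem_prod (Set.left_mem_Icc.mpr hab.le) (Set.left_mem_Icc.mpr hcd.le))
  have hcorner2 := hsub (Set.mk_mem_prod (Set.right_mem_Icc.mpr hab.le) (Set.right_mem_Icc.mpr hcd.le))
  obtain ⟨⟨hX0a, _⟩, hY0c, _⟩ := hcorner1
  obtain ⟨⟨_, hbX1⟩, _, hdY1⟩ := hcorner2
  -- bounds on grid coordinates
  have hXmem : ∀ s ∈ ({X₀, X₁} : Set ℝ) ∪ (fun p : ℝ × ℝ => p.1) '' P, X₀ ≤ s ∧ s ≤ X₁ := by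
    rintro s (h | ⟨p, hp, rfl⟩)
    · rcases h with rfl | rfl
      · exact ⟨le_refl _, hX.le⟩
      · exact ⟨hX.le, le_refl _⟩
    · exact ⟨(hP p hp).1.1, (hP p hp).1.2⟩
  have hYmem : ∀ s ∈ ({Y₀, Y₁} : Set ℝ) ∪ (fun p : ℝ × ℝ => p.2) '' P, Y₀ ≤ s ∧ s ≤ Y₁ := by
    rintro s (h | ⟨p, hp, rfl⟩)
    · rcases h with rfl | rfl
      · exact ⟨le_refl _, hY.le⟩
      · exact ⟨hY.le, le_refl _⟩
    · exact ⟨(hP p hp).2.1, (hP p hp).2.2⟩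
  have hX0x0 : X₀ ≤ x₀ := (hXmem x₀ hx₀).1
  have hx1X1 : x₁ ≤ X₁ := (hXmem x₁ hx₁).2
  have hY0y0 : Y₀ ≤ y₀ := (hYmem y₀ hy₀).1
  have hy1Y1 : y₁ ≤ Y₁ := (hYmem y₁ hy₁).2
  have hax1 : a < x₁ := hza.trans hzx1
  have hx0b : x₀ < b := hzx0.trans hzb
  have hcy1 : c' < y₁ := hzc.trans hzy1
  have hy0d : y₀ < d' := hzy0.trans hzd
  -- a ≤ x₀
  have hax0 : a ≤ x₀ := by
    by_contra h
    push_neg at h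
    have key := hmax x₀ b c' d' hx0b hcd
      (by
        rintro ⟨u, v⟩ ⟨⟨hu1, hu2⟩, hv1, hv2⟩
        exact ⟨⟨hX0x0.trans hu1, hu2.trans hbX1⟩, hY0c.trans hv1, hv2.trans hdY1⟩)
      (by
        rintro p hp ⟨⟨hp1, hp2⟩, hp3, hp4⟩
        rcases lt_or_ge a p.1 with h' | h'
        · exact hempty p hp ⟨⟨h', hp2⟩, hp3, hp4⟩
        · exact hxcons p.1 (Or.inr ⟨p, hp, rfl⟩) ⟨hp1, h'.trans_lt hax1⟩)
      (by
        rintro ⟨u, v⟩ ⟨⟨hu1, hu2⟩, hv1, hv2⟩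
        exact ⟨⟨h.le.trans hu1, hu2⟩, hv1, hv2⟩)
    have : (x₀, c') ∈ Set.Icc a b ×ˢ Set.Icc c' d' := by
      rw [← key]
      exact ⟨⟨le_refl _, hx0b.le⟩, le_refl _, hcd.le⟩
    exact absurd this.1.1 (not_le.mpr h)
  -- x₁ ≤ b
  have hx1b : x₁ ≤ b := by
    by_contra h
    push_neg at h
    have key := hmax a x₁ c' d' hax1 hcd
      (by
        rintro ⟨u, v⟩ ⟨⟨hu1, hu2⟩, hv1, hv2⟩
        exact ⟨⟨hX0a.trans hu1, hu2.trans hx1X1⟩, hY0c.trans hv1, hv2.trans hdY1⟩)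
      (by
        rintro p hp ⟨⟨hp1, hp2⟩, hp3, hp4⟩
        rcases lt_or_ge p.1 b with h' | h'
        · exact hempty p hp ⟨⟨hp1, h'⟩, hp3, hp4⟩
        · exact hxcons p.1 (Or.inr ⟨p, hp, rfl⟩) ⟨hx0b.trans_le h', hp2⟩)
      (by
        rintro ⟨u, v⟩ ⟨⟨hu1, hu2⟩, hv1, hv2⟩
        exact ⟨⟨hu1, hu2.trans h.le⟩, hv1, hv2⟩)
    have : (x₁, c') ∈ Set.Icc a b ×ˢ Set.Icc c' d' := by
      rw [← key]
      exact ⟨⟨hax1.le, le_refl _⟩, le_refl _, hcd.le⟩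
    exact absurd this.1.2 (not_le.mpr h)
  -- c' ≤ y₀
  have hcy0 : c' ≤ y₀ := by
    by_contra h
    push_neg at h
    have key := hmax a b y₀ d' hab hy0d
      (by
        rintro ⟨u, v⟩ ⟨⟨hu1, hu2⟩, hv1, hv2⟩
        exact ⟨⟨hX0a.trans hu1, hu2.trans hbX1⟩, hY0y0.trans hv1, hv2.trans hdY1⟩)
      (by
        rintro p hp ⟨⟨hp1, hp2⟩, hp3, hp4⟩
        rcases lt_or_ge c' p.2 with h' | h'
        · exact hempty p hp ⟨⟨hp1, hp2⟩, h', hp4⟩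
        · exact hycons p.2 (Or.inr ⟨p, hp, rfl⟩) ⟨hp3, h'.trans_lt hcy1⟩)
      (by
        rintro ⟨u, v⟩ ⟨⟨hu1, hu2⟩, hv1, hv2⟩
        exact ⟨⟨hu1, hu2⟩, h.le.trans hv1, hv2⟩)
    have : (a, y₀) ∈ Set.Icc a b ×ˢ Set.Icc c' d' := by
      rw [← key]
      exact ⟨⟨le_refl _, hab.le⟩, le_refl _, hy0d.le⟩
    exact absurd this.2.1 (not_le.mpr h)
  -- y₁ ≤ d'
  have hy1d : y₁ ≤ d' := by
    by_contra h
    push_neg at h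
    have key := hmax a b c' y₁ hab hcy1
      (by
        rintro ⟨u, v⟩ ⟨⟨hu1, hu2⟩, hv1, hv2⟩
        exact ⟨⟨hX0a.trans hu1, hu2.trans hbX1⟩, hY0c.trans hv1, hv2.trans hy1Y1⟩)
      (by
        rintro p hp ⟨⟨hp1, hp2⟩, hp3, hp4⟩
        rcases lt_or_ge p.2 d' with h' | h'
        · exact hempty p hp ⟨⟨hp1, hp2⟩, hp3, h'⟩
        · exact hycons p.2 (Or.inr ⟨p, hp, rfl⟩) ⟨hy0d.trans_le h', hp4⟩)
      (by
        rintro ⟨u, v⟩ ⟨⟨hu1, hu2⟩, hv1, hv2⟩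
        exact ⟨⟨hu1, hu2⟩, hv1, hv2.trans h.le⟩)
    have : (a, y₁) ∈ Set.Icc a b ×ˢ Set.Icc c' d' := by
      rw [← key]
      exact ⟨⟨le_refl _, hab.le⟩, hcy1.le, le_refl _⟩
    exact absurd this.2.2 (not_le.mpr h)
  rintro ⟨u, v⟩ ⟨⟨hu1, hu2⟩, hv1, hv2⟩
  exact ⟨⟨hax0.trans hu1.le, hu2.le.trans hx1b⟩, hcy0.trans hv1.le, hv2.le.trans hy1d⟩
end
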